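/- arXiv:1505.07414 — 2 statements merged into one kernel-verified Lean document; each statement's English description precedes it below -/
import Mathlib

section
/- Let T, p, K be positive natural numbers, let X be a p×T real matrix, let M be a K×K diagonal real matrix with all diagonal entries nonzero, and let F̂ be a T×K real matrix satisfying (Xᵀ X) F̂ = F̂ M and F̂ᵀ F̂ = T · I_K. Define B̂ = T⁻¹ X F̂. Then B̂ᵀ B̂ is invertible and (B̂ᵀ B̂)⁻¹ B̂ᵀ X = F̂ᵀ; equivalently, for every t, the t-th estimated factor vector f̂_t (the t-th column of F̂ᵀ) equals Λ̂_b x_t where Λ̂_b = (B̂ᵀ B̂)⁻¹ B̂ᵀ and x_t is the t-th column of X. -/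
/-!
Transposing the eigen-equation `XᵀX F̂ = F̂ M` (with `M` symmetric) gives `F̂ᵀ XᵀX = M F̂ᵀ`.
Together with `F̂ᵀ F̂ = T • 1` this shows `B̂ᵀ B̂ = T⁻¹ • M` and
`B̂ᵀ X = T⁻¹ • M F̂ᵀ = (B̂ᵀ B̂) F̂ᵀ`, so `B̂ᵀ B̂` is invertible because the eigenvalues in `M`
are nonzero, and cancelling it recovers `F̂ᵀ`.
-/

open Matrix

namespace Matrix

variable {m n k R : Type*}

section CommRing

variable [CommRing R]

theorem transpose_mul_eq_mul_transpose_of_mul_eq [Fintype n] [Fintype k] {A : Matrix n n R}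
    {F : Matrix n k R} {M : Matrix k k R} (hA : A.IsSymm) (hM : M.IsSymm) (h : A * F = F * M) :
    Fᵀ * A = M * Fᵀ := by
  simpa only [transpose_mul, hA.eq, hM.eq] using congrArg transpose h

theorem isSymm_transpose_mul [Fintype m] (X : Matrix m n R) : (Xᵀ * X).IsSymm := by
  rw [IsSymm, transpose_mul, transpose_transpose]

theorem mulVec_col_eq_of_mul_eq [Fintype m] {A : Matrix k m R} {X : Matrix m n R}
    {Y : Matrix k n R} (h : A * X = Y) (t : n) : A *ᵥ (fun i => X i t) = fun j => Y j t := by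
  rw [← h]
  rfl

end CommRing

section Field

variable [Fintype m] [Fintype n] [Fintype k] [Field R] [DecidableEq k]
  {X : Matrix m n R} {F : Matrix n k R} {M : Matrix k k R} {c : R}

theorem transpose_mul_self_smul_mul_eq (hc : c ≠ 0) (hM : M.IsSymm) (heig : Xᵀ * X * F = F * M)
    (hnorm : Fᵀ * F = c • (1 : Matrix k k R)) :
    (c⁻¹ • (X * F))ᵀ * (c⁻¹ • (X * F)) = c⁻¹ • M := by
  have hFXX := transpose_mul_eq_mul_transpose_of_mul_eq (isSymm_transpose_mul X) hM heig
  calc (c⁻¹ • (X * F))ᵀ * (c⁻¹ • (X * F)) = (c⁻¹ * c⁻¹) • (Fᵀ * (Xᵀ * X) * F) := by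
        simp only [transpose_smul, transpose_mul, smul_mul, Matrix.mul_smul, smul_smul,
          Matrix.mul_assoc]
    _ = (c⁻¹ * c⁻¹ * c) • M := by
        rw [hFXX, Matrix.mul_assoc, hnorm, Matrix.mul_smul, Matrix.mul_one, smul_smul]
    _ = c⁻¹ • M := by rw [inv_mul_cancel_right₀ hc]

theorem transpose_smul_mul_mul_eq_gram_mul (hc : c ≠ 0) (hM : M.IsSymm) (heig : Xᵀ * X * F = F * M)
    (hnorm : Fᵀ * F = c • (1 : Matrix k k R)) :
    (c⁻¹ • (X * F))ᵀ * X = (c⁻¹ • (X * F))ᵀ * (c⁻¹ • (X * F)) * Fᵀ := by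
  rw [transpose_mul_self_smul_mul_eq hc hM heig hnorm, transpose_smul, transpose_mul, smul_mul,
    smul_mul, Matrix.mul_assoc,
    transpose_mul_eq_mul_transpose_of_mul_eq (isSymm_transpose_mul X) hM heig]

theorem IsDiag.isUnit_smul {d : R} (hd : d ≠ 0) (hM : M.IsDiag) (hMnz : ∀ i, M i i ≠ 0) :
    IsUnit (d • M) := by
  rw [← hM.diagonal_diag, ← diagonal_smul, isUnit_diagonal, Pi.isUnit_iff]
  exact fun i => isUnit_iff_ne_zero.mpr (smul_ne_zero hd (hMnz i))

end Field

end Matrix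

theorem stmt1_general (T p K : ℕ) (hT : 0 < T)
    (X : Matrix (Fin p) (Fin T) ℝ)
    (M : Matrix (Fin K) (Fin K) ℝ) (hMdiag : M.IsDiag) (hMnz : ∀ i, M i i ≠ 0)
    (Fhat : Matrix (Fin T) (Fin K) ℝ)
    (heig : Xᵀ * X * Fhat = Fhat * M)
    (hnorm : Fhatᵀ * Fhat = (T : ℝ) • (1 : Matrix (Fin K) (Fin K) ℝ))
    (Bhat : Matrix (Fin p) (Fin K) ℝ) (hB : Bhat = (T : ℝ)⁻¹ • (X * Fhat)) :
    IsUnit (Bhatᵀ * Bhat) ∧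
      (Bhatᵀ * Bhat)⁻¹ * Bhatᵀ * X = Fhatᵀ ∧
      ∀ t : Fin T, (fun k => Fhat t k) =
        ((Bhatᵀ * Bhat)⁻¹ * Bhatᵀ).mulVec (fun i => X i t) := by
  have hTne : (T : ℝ) ≠ 0 := Nat.cast_ne_zero.mpr hT.ne'
  have hgram : Bhatᵀ * Bhat = (T : ℝ)⁻¹ • M :=
    hB ▸ transpose_mul_self_smul_mul_eq hTne hMdiag.isSymm heig hnorm
  have hcross : Bhatᵀ * X = Bhatᵀ * Bhat * Fhatᵀ :=
    hB ▸ transpose_smul_mul_mul_eq_gram_mul hTne hMdiag.isSymm heig hnorm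
  have hunit : IsUnit (Bhatᵀ * Bhat) := hgram ▸ hMdiag.isUnit_smul (inv_ne_zero hTne) hMnz
  have hrecover : (Bhatᵀ * Bhat)⁻¹ * Bhatᵀ * X = Fhatᵀ := by
    rw [Matrix.mul_assoc, hcross, ← Matrix.mul_assoc,
      nonsing_inv_mul _ ((isUnit_iff_isUnit_det _).mp hunit), Matrix.one_mul]
  exact ⟨hunit, hrecover, fun t => (mulVec_col_eq_of_mul_eq hrecover t).symm⟩

/-- With `B̂ = T⁻¹ X F̂` the constrained least-squares loading estimate,
`B̂ᵀ B̂` is invertible and `(B̂ᵀ B̂)⁻¹ B̂ᵀ X = F̂ᵀ`; equivalently each estimated factor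
vector satisfies `f̂_t = Λ̂_b x_t` with `Λ̂_b = (B̂ᵀ B̂)⁻¹ B̂ᵀ`. -/
theorem stmt1 (T p K : ℕ) (hT : 0 < T) (hp : 0 < p) (hK : 0 < K)
    (X : Matrix (Fin p) (Fin T) ℝ)
    (M : Matrix (Fin K) (Fin K) ℝ) (hMdiag : M.IsDiag) (hMnz : ∀ i, M i i ≠ 0)
    (Fhat : Matrix (Fin T) (Fin K) ℝ)
    (heig : Xᵀ * X * Fhat = Fhat * M)
    (hnorm : Fhatᵀ * Fhat = (T : ℝ) • (1 : Matrix (Fin K) (Fin K) ℝ))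
    (Bhat : Matrix (Fin p) (Fin K) ℝ) (hB : Bhat = (T : ℝ)⁻¹ • (X * Fhat)) :
    IsUnit (Bhatᵀ * Bhat) ∧
      (Bhatᵀ * Bhat)⁻¹ * Bhatᵀ * X = Fhatᵀ ∧
      ∀ t : Fin T, (fun k => Fhat t k) =
        ((Bhatᵀ * Bhat)⁻¹ * Bhatᵀ).mulVec (fun i => X i t) :=
  stmt1_general T p K hT X M hMdiag hMnz Fhat heig hnorm Bhat hB
end

section
/- Let n be a positive natural number and let Σ and Σ̂ be n×n real symmetric matrices with eigenvalues λ_1 ≥ … ≥ λ_n (of Σ) and λ̂_1 ≥ … ≥ λ̂_n (of Σ̂) arranged in decreasing order. Fix i ∈ {1, …, n} and let ξ_i be a unit-norm eigenvector of Σ for λ_i and ξ̂_i a unit-norm eigenvector of Σ̂ for λ̂_i. With the conventions λ̂_0 = +∞ and λ̂_{n+1} = −∞, suppose δ := min(|λ̂_{i−1} − λ_i|, |λ_i − λ̂_{i+1}|) > 0. Then, after replacing ξ̂_i by −ξ̂_i if necessary (i.e., for at least one of the two sign choices), ‖ξ̂_i − ξ_i‖ ≤ √2 · ‖Σ̂ −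 Σ‖ / δ, where the vector norm is Euclidean and the matrix norm is the spectral norm. -/
/-
Weyl's inequality, obtained from the Courant–Fischer dimension count, puts every eigenvalue `ν k`
of `Shat` within `ε = ‖Shat - S‖` of `μ k`. If `ε < δ` it follows that `ν i` is the only
eigenvalue of `Shat` within `δ` of `μ i`, so `ξhat` is, up to sign, the `i`-th vector of an
eigenbasis of `Shat`, and expanding `ξ` in that eigenbasis gives
`δ² sin² θ ≤ ‖(Shat - μ i) ξ‖² = ‖(Shat - S) ξ‖² ≤ ε²`, `θ` the angle between `ξ` and `ξhat`.
With the sign making `⟪ξhat, ξ⟫ ≥ 0`, `‖±ξhat - ξ‖² = 2 - 2 |cos θ| ≤ 2 sin² θ`.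
If `ε ≥ δ` the bound is at least `√2` and holds trivially.
-/

open scoped RealInnerProductSpace

section

variable {E : Type*} [NormedAddCommGroup E] [InnerProductSpace ℝ E]

theorem Submodule.exists_ne_zero_mem_inf_of_finrank_lt [FiniteDimensional ℝ E]
    (V W : Submodule ℝ E) (h : Module.finrank ℝ E < Module.finrank ℝ V + Module.finrank ℝ W) :
    ∃ x ≠ 0, x ∈ V ∧ x ∈ W := by
  have hsum := Submodule.finrank_sup_add_finrank_inf_eq V W
  have hsup := Submodule.finrank_le (V ⊔ W)
  have hinf : V ⊓ W ≠ ⊥ := by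
    intro hbot
    rw [hbot, finrank_bot] at hsum
    omega
  obtain ⟨x, hx, hx0⟩ := Submodule.exists_mem_ne_zero_of_ne_bot hinf
  exact ⟨x, hx0, hx.1, hx.2⟩

theorem exists_sign_norm_smul_sub_le {u v : E} (hu : ‖u‖ = 1) (hv : ‖v‖ = 1) {δ ε : ℝ}
    (hδ : 0 < δ) (hε : 0 ≤ ε) (h : δ ^ 2 * (1 - ⟪v, u⟫ ^ 2) ≤ ε ^ 2) :
    ∃ s : ℝ, (s = 1 ∨ s = -1) ∧ ‖s • v - u‖ ≤ √2 * ε / δ := by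
  set t := ⟪v, u⟫
  have ht1 : |t| ≤ 1 := by simpa [hu, hv] using abs_real_inner_le_norm v u
  have hbound : ∀ s : ℝ, (s = 1 ∨ s = -1) → s * t = |t| → ‖s • v - u‖ ≤ √2 * ε / δ := by
    intro s hs hst
    have hs1 : |s| = 1 := by rcases hs with rfl | rfl <;> norm_num
    have hsq : ‖s • v - u‖ ^ 2 = 2 - 2 * |t| := by
      rw [norm_sub_sq_real, norm_smul, real_inner_smul_left, Real.norm_eq_abs, hs1, hst, hu, hv]
      ring
    rw [← pow_le_pow_iff_left₀ (norm_nonneg _) (by positivity) two_ne_zero, hsq, div_pow,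
      mul_pow, Real.sq_sqrt zero_le_two, le_div_iff₀ (by positivity)]
    have hsin : 2 - 2 * |t| ≤ 2 * (1 - t ^ 2) := by nlinarith [sq_abs t, abs_nonneg t]
    nlinarith [sq_nonneg δ]
  rcases le_total 0 t with ht | ht
  · exact ⟨1, Or.inl rfl, hbound 1 (Or.inl rfl) (by rw [one_mul, abs_of_nonneg ht])⟩
  · exact ⟨-1, Or.inr rfl, hbound (-1) (Or.inr rfl) (by rw [neg_one_mul, abs_of_nonpos ht])⟩

section

variable {ι : Type*} [Fintype ι]

namespace OrthonormalBasis

theorem inner_eq_zero_of_mem_span_image (b : OrthonormalBasis ι ℝ E) {J : Set ι} {x : E}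
    (hx : x ∈ Submodule.span ℝ (b '' J)) {j : ι} (hj : j ∉ J) : ⟪b j, x⟫ = 0 := by
  induction hx using Submodule.span_induction with
  | mem y hy =>
      obtain ⟨k, hk, rfl⟩ := hy
      exact b.orthonormal.2 fun h => hj (h ▸ hk)
  | zero => exact inner_zero_right _
  | add y z _ _ hy hz => rw [inner_add_right, hy, hz, add_zero]
  | smul a y _ hy => rw [real_inner_smul_right, hy, mul_zero]

theorem finrank_span_image (b : OrthonormalBasis ι ℝ E) (J : Finset ι) :
    Module.finrank ℝ (Submodule.span ℝ (b '' J)) = J.card := by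
  have hli : LinearIndependent ℝ fun j : (J : Set ι) => b j :=
    b.orthonormal.linearIndependent.comp Subtype.val Subtype.val_injective
  rw [Set.image_eq_range, finrank_span_eq_card hli]
  simp

theorem inner_sq_eq_of_inner_eq_zero (b : OrthonormalBasis ι ℝ E) {v : E}
    (hv : ‖v‖ = 1) {i : ι} (hvi : ∀ j ≠ i, ⟪b j, v⟫ = 0) (u : E) :
    ⟪v, u⟫ ^ 2 = ⟪b i, u⟫ ^ 2 := by
  have hvu : ⟪v, u⟫ = ⟪b i, v⟫ * ⟪b i, u⟫ := by
    rw [← b.sum_inner_mul_inner v u, Finset.sum_eq_single i (fun j _ hj => by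
      rw [real_inner_comm, hvi j hj, zero_mul]) (by simp), real_inner_comm]
  have hvi1 : ⟪b i, v⟫ ^ 2 = 1 := by
    rw [← one_pow 2, ← hv, ← b.sum_sq_inner_right,
      Finset.sum_eq_single i (fun j _ hj => by rw [hvi j hj, sq, zero_mul]) (by simp)]
  rw [hvu, mul_pow, hvi1, one_mul]

end OrthonormalBasis

variable {T : E →ₗ[ℝ] E} {b : OrthonormalBasis ι ℝ E} {μ : ι → ℝ}

theorem inner_eigenbasis_apply (hb : ∀ j, T (b j) = μ j • b j) (x : E) (j : ι) :
    ⟪b j, T x⟫ = μ j * ⟪b j, x⟫ := by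
  classical
  conv_lhs => rw [← b.sum_repr' x]
  simp only [map_sum, map_smul, hb, smul_smul, inner_sum, real_inner_smul_right, b.inner_eq_ite]
  simp [mul_comm]

theorem inner_apply_self_eq_sum (hb : ∀ j, T (b j) = μ j • b j) (x : E) :
    ⟪x, T x⟫ = ∑ j, μ j * ⟪b j, x⟫ ^ 2 := by
  rw [← b.sum_inner_mul_inner x (T x)]
  refine Finset.sum_congr rfl fun j _ => ?_
  rw [inner_eigenbasis_apply hb, real_inner_comm x (b j)]
  ring

theorem norm_apply_sub_smul_sq (hb : ∀ j, T (b j) = μ j • b j) (x : E) (m : ℝ) :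
    ‖T x - m • x‖ ^ 2 = ∑ j, (μ j - m) ^ 2 * ⟪b j, x⟫ ^ 2 := by
  rw [← b.sum_sq_inner_right]
  refine Finset.sum_congr rfl fun j _ => ?_
  rw [inner_sub_right, inner_eigenbasis_apply hb, real_inner_smul_right]
  ring

theorem inner_eigenbasis_eq_zero (hb : ∀ j, T (b j) = μ j • b j) {x : E} {m : ℝ}
    (hx : T x = m • x) {j : ι} (hj : μ j ≠ m) : ⟪b j, x⟫ = 0 := by
  have h := inner_eigenbasis_apply hb x j
  rw [hx, real_inner_smul_right] at h
  have h' : (μ j - m) * ⟪b j, x⟫ = 0 := by rw [sub_mul]; linarith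
  exact (mul_eq_zero.mp h').resolve_left (sub_ne_zero.mpr hj)

theorem le_inner_apply_self_of_mem_span (hb : ∀ j, T (b j) = μ j • b j) {J : Set ι} {a : ℝ}
    (hJ : ∀ j ∈ J, a ≤ μ j) {x : E} (hx : x ∈ Submodule.span ℝ (b '' J)) :
    a * ‖x‖ ^ 2 ≤ ⟪x, T x⟫ := by
  rw [inner_apply_self_eq_sum hb, ← b.sum_sq_inner_right, Finset.mul_sum]
  refine Finset.sum_le_sum fun j _ => ?_
  by_cases hj : j ∈ J
  · exact mul_le_mul_of_nonneg_right (hJ j hj) (sq_nonneg _)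
  · simp [b.inner_eq_zero_of_mem_span_image hx hj]

theorem inner_apply_self_le_of_mem_span (hb : ∀ j, T (b j) = μ j • b j) {J : Set ι} {a : ℝ}
    (hJ : ∀ j ∈ J, μ j ≤ a) {x : E} (hx : x ∈ Submodule.span ℝ (b '' J)) :
    ⟪x, T x⟫ ≤ a * ‖x‖ ^ 2 := by
  rw [inner_apply_self_eq_sum hb, ← b.sum_sq_inner_right, Finset.mul_sum]
  refine Finset.sum_le_sum fun j _ => ?_
  by_cases hj : j ∈ J
  · exact mul_le_mul_of_nonneg_right (hJ j hj) (sq_nonneg _)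
  · simp [b.inner_eq_zero_of_mem_span_image hx hj]

/-- Courant–Fischer: the two spans meet in a nonzero vector, whose Rayleigh quotient is `≥ a` for
`T` and `≤ c` for `T'`. -/
theorem le_add_of_card_add_card_gt {T' : E →ₗ[ℝ] E} {b' : OrthonormalBasis ι ℝ E} {μ' : ι → ℝ}
    (hb : ∀ j, T (b j) = μ j • b j) (hb' : ∀ j, T' (b' j) = μ' j • b' j) {ε : ℝ}
    (hε : ∀ x, ‖T x - T' x‖ ≤ ε * ‖x‖) {J K : Finset ι}
    (hcard : Fintype.card ι < J.card + K.card) {a c : ℝ} (hJ : ∀ j ∈ J, a ≤ μ j)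
    (hK : ∀ k ∈ K, μ' k ≤ c) : a ≤ c + ε := by
  have : FiniteDimensional ℝ E := b.toBasis.finiteDimensional_of_finite
  obtain ⟨x, hx0, hxJ, hxK⟩ := Submodule.exists_ne_zero_mem_inf_of_finrank_lt
    (Submodule.span ℝ (b '' J)) (Submodule.span ℝ (b' '' K)) (by
      rwa [b.finrank_span_image, b'.finrank_span_image, Module.finrank_eq_card_basis b.toBasis])
  have hlow := le_inner_apply_self_of_mem_span hb (J := J) hJ hxJ
  have hup := inner_apply_self_le_of_mem_span hb' (J := K) hK hxK
  have hdiff : ⟪x, T x - T' x⟫ ≤ ε * ‖x‖ ^ 2 :=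
    calc ⟪x, T x - T' x⟫ ≤ ‖x‖ * ‖T x - T' x‖ := real_inner_le_norm _ _
      _ ≤ ‖x‖ * (ε * ‖x‖) := mul_le_mul_of_nonneg_left (hε x) (norm_nonneg x)
      _ = ε * ‖x‖ ^ 2 := by ring
  rw [inner_sub_right] at hdiff
  refine le_of_mul_le_mul_right (a := ‖x‖ ^ 2) ?_ (by positivity)
  linarith

theorem sq_mul_sub_inner_sq_le (hb : ∀ j, T (b j) = μ j • b j) {i : ι} {m δ : ℝ} (hδ : 0 ≤ δ)
    (hgap : ∀ j ≠ i, δ ≤ |μ j - m|) (x : E) :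
    δ ^ 2 * (‖x‖ ^ 2 - ⟪b i, x⟫ ^ 2) ≤ ‖T x - m • x‖ ^ 2 := by
  classical
  have hrest : ‖x‖ ^ 2 - ⟪b i, x⟫ ^ 2 = ∑ j ∈ Finset.univ.erase i, ⟪b j, x⟫ ^ 2 := by
    rw [← b.sum_sq_inner_right, ← Finset.add_sum_erase _ _ (Finset.mem_univ i), add_sub_cancel_left]
  rw [hrest, norm_apply_sub_smul_sq hb, Finset.mul_sum]
  calc ∑ j ∈ Finset.univ.erase i, δ ^ 2 * ⟪b j, x⟫ ^ 2
      ≤ ∑ j ∈ Finset.univ.erase i, (μ j - m) ^ 2 * ⟪b j, x⟫ ^ 2 := by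
        refine Finset.sum_le_sum fun j hj => mul_le_mul_of_nonneg_right ?_ (sq_nonneg _)
        rw [← sq_abs (μ j - m)]
        exact pow_le_pow_left₀ hδ (hgap j (Finset.ne_of_mem_erase hj)) 2
    _ ≤ ∑ j, (μ j - m) ^ 2 * ⟪b j, x⟫ ^ 2 :=
        Finset.sum_le_sum_of_subset_of_nonneg (Finset.erase_subset _ _)
          (fun j _ _ => by positivity)

theorem sq_mul_one_sub_inner_sq_le (hb : ∀ j, T (b j) = μ j • b j) {i : ι} {m δ ε : ℝ}
    (hδ : 0 ≤ δ) (hgap : ∀ j ≠ i, δ ≤ |μ j - m|) (hi : |μ i - m| < δ) {u v : E} (hu : ‖u‖ = 1)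
    (hTu : ‖T u - m • u‖ ≤ ε) (hv : ‖v‖ = 1) (hTv : T v = μ i • v) :
    δ ^ 2 * (1 - ⟪v, u⟫ ^ 2) ≤ ε ^ 2 := by
  -- `μ i` is the only eigenvalue within `δ` of `m`, so `v` is a multiple of `b i`.
  have hvi : ∀ j ≠ i, ⟪b j, v⟫ = 0 := fun j hj =>
    inner_eigenbasis_eq_zero hb hTv fun h => by linarith [hgap j hj, h ▸ hi]
  calc δ ^ 2 * (1 - ⟪v, u⟫ ^ 2) = δ ^ 2 * (‖u‖ ^ 2 - ⟪b i, u⟫ ^ 2) := by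
        rw [b.inner_sq_eq_of_inner_eq_zero hv hvi, hu, one_pow]
    _ ≤ ‖T u - m • u‖ ^ 2 := sq_mul_sub_inner_sq_le hb hδ hgap u
    _ ≤ ε ^ 2 := pow_le_pow_left₀ (norm_nonneg _) hTu 2

end

/-- Weyl's inequality. -/
theorem abs_sub_le_of_norm_apply_sub_le {n : ℕ} {T T' : E →ₗ[ℝ] E}
    {b b' : OrthonormalBasis (Fin n) ℝ E} {μ μ' : Fin n → ℝ} (hμ : Antitone μ)
    (hμ' : Antitone μ') (hb : ∀ j, T (b j) = μ j • b j) (hb' : ∀ j, T' (b' j) = μ' j • b' j)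
    {ε : ℝ} (hε : ∀ x, ‖T x - T' x‖ ≤ ε * ‖x‖) (i : Fin n) : |μ i - μ' i| ≤ ε := by
  have hcard : Fintype.card (Fin n) < (Finset.Iic i).card + (Finset.Ici i).card := by
    rw [Fin.card_Iic, Fin.card_Ici, Fintype.card_fin]
    omega
  have hε' : ∀ x, ‖T' x - T x‖ ≤ ε * ‖x‖ := fun x => norm_sub_rev (T x) _ ▸ hε x
  rw [abs_sub_le_iff]
  constructor
  · linarith [le_add_of_card_add_card_gt hb hb' hε hcard
      (fun j hj => hμ (Finset.mem_Iic.mp hj)) (fun k hk => hμ' (Finset.mem_Ici.mp hk))]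
  · linarith [le_add_of_card_add_card_gt hb' hb hε' hcard
      (fun j hj => hμ' (Finset.mem_Iic.mp hj)) (fun k hk => hμ (Finset.mem_Ici.mp hk))]

/-- `hprev` and `hnext` only bound distances; Weyl's inequality `hweyl` decides on which side
of `μ i` the neighbours `ν (i - 1)` and `ν (i + 1)` lie. -/
theorem le_abs_sub_of_neighbours {n : ℕ} {μ ν : Fin n → ℝ} (hμ : Antitone μ) (hν : Antitone ν)
    {ε δ : ℝ} (hweyl : ∀ k, |ν k - μ k| ≤ ε) (hεδ : ε < δ) {i : Fin n}
    (hprev : ∀ j : Fin n, (j : ℕ) + 1 = (i : ℕ) → δ ≤ |ν j - μ i|)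
    (hnext : ∀ j : Fin n, (i : ℕ) + 1 = (j : ℕ) → δ ≤ |μ i - ν j|) :
    ∀ j ≠ i, δ ≤ |ν j - μ i| := by
  intro j hji
  rcases lt_or_gt_of_ne hji with hlt | hgt
  · have hi : 0 < (i : ℕ) := lt_of_le_of_lt (Nat.zero_le _) hlt
    set p : Fin n := ⟨i - 1, by omega⟩
    have hp : δ ≤ |ν p - μ i| := hprev p (by simp only [p]; omega)
    have hwp := abs_le.mp (hweyl p)
    have hμp : μ i ≤ μ p := hμ (Fin.le_def.mpr (by simp only [p]; omega))
    have hνp : ν p ≤ ν j := hν (Fin.le_def.mpr (by simp only [p]; omega))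
    rcases le_abs'.mp hp with h | h
    · linarith
    · exact le_abs.mpr (Or.inl (by linarith))
  · set q : Fin n := ⟨i + 1, by omega⟩
    have hq : δ ≤ |μ i - ν q| := hnext q rfl
    have hwq := abs_le.mp (hweyl q)
    have hμq : μ q ≤ μ i := hμ (Fin.le_def.mpr (by simp only [q]; omega))
    have hνq : ν j ≤ ν q := hν (Fin.le_def.mpr (by simp only [q]; omega))
    rcases le_abs'.mp hq with h | h
    · linarith
    · exact le_abs.mpr (Or.inr (by linarith))

theorem exists_sign_norm_smul_sub_le_of_eigengap {n : ℕ} {T T' : E →ₗ[ℝ] E}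
    {b b' : OrthonormalBasis (Fin n) ℝ E} {μ ν : Fin n → ℝ} (hμ : Antitone μ) (hν : Antitone ν)
    (hb : ∀ j, T (b j) = μ j • b j) (hb' : ∀ j, T' (b' j) = ν j • b' j) {ε : ℝ}
    (hε : ∀ x, ‖T' x - T x‖ ≤ ε * ‖x‖) {i : Fin n} {u v : E} (hTu : T u = μ i • u)
    (hu : ‖u‖ = 1) (hT'v : T' v = ν i • v) (hv : ‖v‖ = 1) {δ : ℝ} (hδ : 0 < δ)
    (hprev : ∀ j : Fin n, (j : ℕ) + 1 = (i : ℕ) → δ ≤ |ν j - μ i|)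
    (hnext : ∀ j : Fin n, (i : ℕ) + 1 = (j : ℕ) → δ ≤ |μ i - ν j|) :
    ∃ s : ℝ, (s = 1 ∨ s = -1) ∧ ‖s • v - u‖ ≤ √2 * ε / δ := by
  have hεu : ‖T' u - μ i • u‖ ≤ ε := by simpa [hTu, hu] using hε u
  refine exists_sign_norm_smul_sub_le hu hv hδ ((norm_nonneg _).trans hεu) ?_
  rcases le_or_gt δ ε with hδε | hεδ
  · calc δ ^ 2 * (1 - ⟪v, u⟫ ^ 2) ≤ δ ^ 2 * 1 := by gcongr; linarith [sq_nonneg ⟪v, u⟫]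
      _ ≤ ε ^ 2 := by rw [mul_one]; exact pow_le_pow_left₀ hδ.le hδε 2
  · have hweyl : ∀ k, |ν k - μ k| ≤ ε := abs_sub_le_of_norm_apply_sub_le hν hμ hb' hb hε
    exact sq_mul_one_sub_inner_sq_le hb' hδ.le
      (le_abs_sub_of_neighbours hμ hν hweyl hεδ hprev hnext) ((hweyl i).trans_lt hεδ) hu hεu hv hT'v

end

open Matrix
open scoped Matrix.Norms.L2Operator

theorem Matrix.IsHermitian.exists_orthonormalBasis_toEuclideanLin_apply {ι : Type*} [Fintype ι]
    [DecidableEq ι] {A : Matrix ι ι ℝ} (hA : A.IsHermitian) {μ : ι → ℝ}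
    (hμ : ∃ σ : Equiv.Perm ι, μ = hA.eigenvalues ∘ σ) :
    ∃ b : OrthonormalBasis ι ℝ (EuclideanSpace ℝ ι), ∀ j, toEuclideanLin A (b j) = μ j • b j := by
  obtain ⟨σ, rfl⟩ := hμ
  refine ⟨hA.eigenvectorBasis.reindex σ.symm, fun j => ?_⟩
  rw [OrthonormalBasis.reindex_apply, Equiv.symm_symm]
  ext k
  simpa using congrFun (hA.mulVec_eigenvectorBasis (σ j)) k

theorem stmt11_general (n : ℕ)
    (S Shat : Matrix (Fin n) (Fin n) ℝ)
    (hS : S.IsHermitian) (hShat : Shat.IsHermitian)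
    (μ ν : Fin n → ℝ)
    (hμanti : Antitone μ) (hνanti : Antitone ν)
    (hμ : ∃ σ : Equiv.Perm (Fin n), μ = hS.eigenvalues ∘ σ)
    (hν : ∃ σ : Equiv.Perm (Fin n), ν = hShat.eigenvalues ∘ σ)
    (i : Fin n)
    (ξ : Fin n → ℝ) (hξ : S.mulVec ξ = μ i • ξ) (hξnorm : ∑ k, ξ k ^ 2 = 1)
    (ξhat : Fin n → ℝ) (hξhat : Shat.mulVec ξhat = ν i • ξhat)
    (hξhatnorm : ∑ k, ξhat k ^ 2 = 1)
    (δ : ℝ) (hδpos : 0 < δ)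
    (hprev : ∀ j : Fin n, (j : ℕ) + 1 = (i : ℕ) → δ ≤ |ν j - μ i|)
    (hnext : ∀ j : Fin n, (i : ℕ) + 1 = (j : ℕ) → δ ≤ |μ i - ν j|) :
    ∃ s : ℝ, (s = 1 ∨ s = -1) ∧
      Real.sqrt (∑ k, (s * ξhat k - ξ k) ^ 2) ≤ Real.sqrt 2 * ‖Shat - S‖ / δ := by
  obtain ⟨b, hb⟩ := hS.exists_orthonormalBasis_toEuclideanLin_apply hμ
  obtain ⟨b', hb'⟩ := hShat.exists_orthonormalBasis_toEuclideanLin_apply hν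
  have hnorm (w : Fin n → ℝ) : ‖WithLp.toLp 2 w‖ = √(∑ k, w k ^ 2) := by
    simp [EuclideanSpace.norm_eq]
  have hε (x : EuclideanSpace ℝ (Fin n)) :
      ‖toEuclideanLin Shat x - toEuclideanLin S x‖ ≤ ‖Shat - S‖ * ‖x‖ := by
    rw [← LinearMap.sub_apply, ← map_sub]
    exact (Shat - S).l2_opNorm_mulVec x
  obtain ⟨s, hs, hdist⟩ := exists_sign_norm_smul_sub_le_of_eigengap hμanti hνanti hb hb' hε
    (u := WithLp.toLp 2 ξ) (v := WithLp.toLp 2 ξhat)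
    (by simp [hξ]) (by rw [hnorm, hξnorm, Real.sqrt_one])
    (by simp [hξhat]) (by rw [hnorm, hξhatnorm, Real.sqrt_one])
    hδpos hprev hnext
  refine ⟨s, hs, ?_⟩
  rwa [← WithLp.toLp_smul, ← WithLp.toLp_sub, hnorm] at hdist

/-- (Davis–Kahan `sin θ` theorem, in the form of Lemma A.2(b) of the paper.)
If `μ` and `ν` list the eigenvalues of the real symmetric matrices `S` and `Shat` in
decreasing order, `ξ` is a unit eigenvector of `S` for `μ i`, `ξhat` a unit eigenvector of
`Shat` for `ν i`, and `δ > 0` is a lower bound for `|ν_{i−1} − μ_i|` and `|μ_i − ν_{i+1}|`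
(the conventions `ν_0 = +∞`, `ν_{n+1} = −∞` making absent constraints vacuous), then for at
least one sign choice `‖±ξhat − ξ‖ ≤ √2 ‖Shat − S‖ / δ` (Euclidean and spectral norms). -/
theorem stmt11 (n : ℕ) (hn : 0 < n)
    (S Shat : Matrix (Fin n) (Fin n) ℝ)
    (hS : S.IsHermitian) (hShat : Shat.IsHermitian)
    (μ ν : Fin n → ℝ)
    (hμanti : Antitone μ) (hνanti : Antitone ν)
    (hμ : ∃ σ : Equiv.Perm (Fin n), μ = hS.eigenvalues ∘ σ)
    (hν : ∃ σ : Equiv.Perm (Fin n), ν = hShat.eigenvalues ∘ σ)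
    (i : Fin n)
    (ξ : Fin n → ℝ) (hξ : S.mulVec ξ = μ i • ξ) (hξnorm : ∑ k, ξ k ^ 2 = 1)
    (ξhat : Fin n → ℝ) (hξhat : Shat.mulVec ξhat = ν i • ξhat)
    (hξhatnorm : ∑ k, ξhat k ^ 2 = 1)
    (δ : ℝ) (hδpos : 0 < δ)
    (hprev : ∀ j : Fin n, (j : ℕ) + 1 = (i : ℕ) → δ ≤ |ν j - μ i|)
    (hnext : ∀ j : Fin n, (i : ℕ) + 1 = (j : ℕ) → δ ≤ |μ i - ν j|) :
    ∃ s : ℝ, (s = 1 ∨ s = -1) ∧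
      Real.sqrt (∑ k, (s * ξhat k - ξ k) ^ 2) ≤ Real.sqrt 2 * ‖Shat - S‖ / δ :=
  stmt11_general n S Shat hS hShat μ ν hμanti hνanti hμ hν i ξ hξ hξnorm ξhat hξhat hξhatnorm δ
    hδpos hprev hnext
end
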